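/- Correspondence between pointwise and extremal-depth central regions (Proposition 5): Fix γ ∈ (0,1). Assume: every marginal CDF F_t is continuous on ℝ; the quantile functions q_{γ/2} and q_{1−γ/2} belong to C(I,ℝ); and for every h ∈ C(I,ℝ) the set {x ∈ C(I,ℝ) : d_x = d_h and x ≠ h} has P-outer measure zero, where d_f := inf{r ∈ [0,1] : Φ_f(r) > 0}. Define the pointwise central region Q_{1−γ} := {f ∈ C(I,ℝ) : q_{γ/2}(t) ≤ f(t) ≤ q_{1−γ/2}(t) for all t ∈ I}, let α := ED(q_{γ/2},P), and let C* := {f ∈ C(I,ℝ) : ED(f,P) ≥ α}. Then P*(Q_{1−γ} Δ C*) = 0, where Δ denotes symmetric difference; that is, the pointwise central region coincides with an extremal-depth central region up to a set of P-measure zero. -/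

import Mathlib

/-!
With continuous marginals the pointwise depth is `D_f(t) = 1 - |1 - 2 F_t(f t)|`, so a path in
the pointwise band has `D_f ≥ γ` everywhere, a path outside it has `D_f(t) ≤ γ` somewhere, and for
continuous `f` the level `d_f` is `min_t D_f(t)`. Comparing d-CDFs near their first disagreement
shows `g ≺ h` whenever `d_g < d_h`; as the level sets of `d` are null, `ED(g) = P{d_x < d_g}`,
and `d = γ` at the lower quantile. Hence the band lies in `C*`, and a path of `C* \ band` has
either `d_f = γ`, a null event, or `d_f < γ` with no mass of `d` in `[d_f, γ)`, which also
happens with probability zero.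
-/

open MeasureTheory Set Filter
open scoped NNReal ENNReal symmDiff

noncomputable section

/-- The space `C(I, ℝ)` of continuous real-valued functions on `I = [0,1]`,
equipped with the sup metric. -/
abbrev FSp := C(unitInterval, ℝ)

/-- Borel σ-algebra on `C(I, ℝ)`. -/
instance : MeasurableSpace FSp := borel FSp
instance : BorelSpace FSp := ⟨rfl⟩

/-- Pointwise depth `D_g(t) = 1 - |P{x : x(t) > g(t)} - P{x : x(t) < g(t)}|`. -/
def pdepth (P : Measure FSp) (g : unitInterval → ℝ) (t : unitInterval) : ℝ :=
  1 - |(P {x : FSp | g t < x t}).toReal - (P {x : FSp | x t < g t}).toReal|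

/-- Depth CDF (d-CDF) `Φ_g(r) = Leb{t ∈ I : D_g(t) ≤ r}`. -/
def dcdf (P : Measure FSp) (g : unitInterval → ℝ) (r : ℝ) : ℝ :=
  (volume {t : unitInterval | pdepth P g t ≤ r}).toReal

/-- The set `R(g,h) = {r ∈ [0,1] : Φ_g(r) ≠ Φ_h(r)}`. -/
def Rset (P : Measure FSp) (g h : unitInterval → ℝ) : Set ℝ :=
  {r ∈ Icc (0:ℝ) 1 | dcdf P g r ≠ dcdf P h r}

/-- `g ≺ h`: `g` is more extreme than `h`, i.e. `R(g,h)` is nonempty and, with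
`r* = inf R(g,h)`, there is `δ > 0` with `Φ_g(r) > Φ_h(r)` for all
`r ∈ (r*, r*+δ) ∩ [0,1]`.  `g ⪰ h` is `¬ prec P g h`. -/
def prec (P : Measure FSp) (g h : unitInterval → ℝ) : Prop :=
  (Rset P g h).Nonempty ∧
  ∃ δ > 0, ∀ r ∈ Ioo (sInf (Rset P g h)) (sInf (Rset P g h) + δ) ∩ Icc (0:ℝ) 1,
    dcdf P h r < dcdf P g r

/-- Extremal depth `ED(g,P) = P*{x ∈ C(I,ℝ) : g ⪰ x}` (a measure applied to an
arbitrary set is the induced outer measure). -/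
def ed (P : Measure FSp) (g : unitInterval → ℝ) : ℝ :=
  (P {x : FSp | ¬ prec P g ⇑x}).toReal

/-- Minimal depth level `d_f = inf{r ∈ [0,1] : Φ_f(r) > 0}`. -/
def dmin (P : Measure FSp) (f : unitInterval → ℝ) : ℝ :=
  sInf {r ∈ Icc (0:ℝ) 1 | 0 < dcdf P f r}

/-- Marginal CDF `F_t(y) = P{x : x(t) ≤ y}`. -/
def margF (P : Measure FSp) (t : unitInterval) (y : ℝ) : ℝ :=
  (P {x : FSp | x t ≤ y}).toReal

/-- Pointwise quantile function `q_a(t) = inf{y : F_t(y) ≥ a}`. -/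
def quant (P : Measure FSp) (a : ℝ) (t : unitInterval) : ℝ :=
  sInf {y : ℝ | a ≤ margF P t y}

/-- Lower envelope `f_L(t) = inf{f(t) : f ∈ C(I,ℝ), ED(f,P) > α}`. -/
def envL (P : Measure FSp) (α : ℝ) (t : unitInterval) : ℝ :=
  sInf ((fun f : FSp => f t) '' {f : FSp | α < ed P ⇑f})

/-- Upper envelope `f_U(t) = sup{f(t) : f ∈ C(I,ℝ), ED(f,P) > α}`. -/
def envU (P : Measure FSp) (α : ℝ) (t : unitInterval) : ℝ :=
  sSup ((fun f : FSp => f t) '' {f : FSp | α < ed P ⇑f})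

/-- The `(1-α)` extremal-depth central region `C_{1-α}`. -/
def centralRegion (P : Measure FSp) (α : ℝ) : Set FSp :=
  {x : FSp | ∀ t, envL P α t ≤ x t ∧ x t ≤ envU P α t}

/-- Boundary `∂C_{1-α}` of the central region. -/
def centralBoundary (P : Measure FSp) (α : ℝ) : Set FSp :=
  {x ∈ centralRegion P α | ∃ t, x t = envL P α t ∨ x t = envU P α t}

open scoped Topology
open ProbabilityTheory

instance unitInterval.isOpenPosMeasure_volume :
    (volume : Measure unitInterval).IsOpenPosMeasure := by
  refine ⟨fun U hU ⟨t, ht⟩ => ?_⟩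
  rcases lt_or_eq_of_le t.2.2 with ht1 | ht1
  · obtain ⟨u, htu, hsub⟩ := exists_Ico_subset_of_mem_nhds (hU.mem_nhds ht) ⟨1, ht1⟩
    refine (measure_pos_of_superset hsub ?_).ne'
    simpa [unitInterval.volume_Ico] using htu
  · obtain ⟨l, hlt, hsub⟩ := exists_Ioc_subset_of_mem_nhds (hU.mem_nhds ht)
      ⟨0, by rw [← Subtype.coe_lt_coe, ht1]; exact one_pos⟩
    refine (measure_pos_of_superset hsub ?_).ne'
    simpa [unitInterval.volume_Ioc] using hlt

lemma apply_sInf_setOf_le_apply {F : ℝ → ℝ} (hF : Continuous F) (hbot : Tendsto F atBot (𝓝 0))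
    (htop : Tendsto F atTop (𝓝 1)) {a : ℝ} (ha : a ∈ Ioo (0:ℝ) 1) :
    F (sInf {y | a ≤ F y}) = a := by
  set S := {y | a ≤ F y}
  have hne : S.Nonempty := (htop.eventually (eventually_ge_nhds ha.2)).exists
  obtain ⟨y₀, hy₀⟩ := (hbot.eventually (eventually_lt_nhds ha.1)).exists_forall_of_atBot
  have hbdd : BddBelow S := ⟨y₀, fun y hy => le_of_not_gt fun h => (hy₀ y h.le).not_ge hy⟩
  refine le_antisymm ?_ ((isClosed_le continuous_const hF).csInf_mem hne hbdd)
  refine le_of_tendsto (x := 𝓝[<] sInf S) (hF.tendsto _ |>.mono_left nhdsWithin_le_nhds) ?_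
  exact eventually_nhdsWithin_of_forall fun y hy =>
    (not_le.1 (show y ∉ S from notMem_of_lt_csInf hy hbdd)).le

lemma measure_setOf_lt_and_measure_Ico_eq_zero (μ : Measure ℝ) (γ : ℝ) :
    μ {c | c < γ ∧ μ (Ico c γ) = 0} = 0 := by
  set S := {c | c < γ ∧ μ (Ico c γ) = 0}
  set T := (S ∩ range ((↑) : ℚ → ℝ)) ∪ {c | IsLeast S c}
  have hTS : T ⊆ S := union_subset inter_subset_left fun _ hc => hc.1
  have hT : T.Countable :=
    ((countable_range _).mono inter_subset_right).union
      (Set.Subsingleton.countable fun _ ha _ hb => IsLeast.unique ha hb)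
  -- `S` is upward closed below `γ`, so it is covered by the `Ico c γ` with `c` rational or least.
  have hcover : S ⊆ ⋃ c ∈ T, Ico c γ := by
    intro c hc
    by_cases hleast : IsLeast S c
    · exact mem_biUnion (Or.inr hleast) ⟨le_rfl, hc.1⟩
    obtain ⟨c', hc', hlt⟩ : ∃ c' ∈ S, c' < c := by
      simpa [IsLeast, hc, lowerBounds] using hleast
    obtain ⟨q, hq, hqc⟩ := exists_rat_btwn hlt
    have hqS : (q : ℝ) ∈ S :=
      ⟨hqc.trans hc.1, measure_mono_null (Ico_subset_Ico_left hq.le) hc'.2⟩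
    exact mem_biUnion (Or.inl ⟨hqS, q, rfl⟩) ⟨hqc.le, hc.1⟩
  exact measure_mono_null hcover ((measure_biUnion_null_iff hT).2 fun c hc => (hTS hc).2)

lemma measure_setOf_lt_and_measure_lt_le {Ω : Type*} [MeasurableSpace Ω] (P : Measure Ω)
    [IsFiniteMeasure P] {D : Ω → ℝ} (hD : Measurable D) (γ : ℝ) :
    P {ω | D ω < γ ∧ P {ω' | D ω' < γ} ≤ P {ω' | D ω' < D ω}} = 0 := by
  refine measure_mono_null (fun ω hω => ?_) (Measure.preimage_null_of_map_null
    hD.aemeasurable (measure_setOf_lt_and_measure_Ico_eq_zero (P.map D) γ))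
  refine ⟨hω.1, ?_⟩
  have hIco : D ⁻¹' Ico (D ω) γ = {ω' | D ω' < γ} \ {ω' | D ω' < D ω} := by
    ext; simp [and_comm]
  rw [Measure.map_apply hD measurableSet_Ico, hIco,
    measure_sdiff (s₁ := {ω' | D ω' < γ}) (fun _ h => h.trans hω.1)
      (measurableSet_lt hD measurable_const).nullMeasurableSet (measure_ne_top _ _),
    tsub_eq_zero_of_le hω.2]

lemma le_one_sub_abs_of_mem_Icc {F : ℝ → ℝ} (hF : Monotone F) {a b y γ : ℝ} (ha : F a = γ / 2)
    (hb : F b = 1 - γ / 2) (hy : y ∈ Icc a b) : γ ≤ 1 - |1 - 2 * F y| := by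
  have h₁ := ha ▸ hF hy.1
  have h₂ := hb ▸ hF hy.2
  have : |1 - 2 * F y| ≤ 1 - γ := abs_le.2 ⟨by linarith, by linarith⟩
  linarith

lemma one_sub_abs_le_of_notMem_Icc {F : ℝ → ℝ} (hF : Monotone F) {a b y γ : ℝ}
    (ha : F a = γ / 2) (hb : F b = 1 - γ / 2) (hy : y ∉ Icc a b) : 1 - |1 - 2 * F y| ≤ γ := by
  rcases not_and_or.1 hy with h | h
  · have := ha ▸ hF (not_le.1 h).le
    linarith [le_abs_self (1 - 2 * F y)]
  · have := hb ▸ hF (not_le.1 h).le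
    linarith [neg_abs_le (1 - 2 * F y)]

lemma pdepth_le_one (P : Measure FSp) (g : unitInterval → ℝ) (t : unitInterval) :
    pdepth P g t ≤ 1 :=
  sub_le_self _ (abs_nonneg _)

section Marginal

variable (P : Measure FSp) [IsProbabilityMeasure P]

instance isProbabilityMeasure_map_eval (t : unitInterval) :
    IsProbabilityMeasure (P.map fun x : FSp => x t) :=
  Measure.isProbabilityMeasure_map (continuous_eval_const t).measurable.aemeasurable

lemma margF_eq_cdf (t : unitInterval) : margF P t = cdf (P.map fun x : FSp => x t) := by
  ext y
  rw [cdf_eq_real, measureReal_def,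
    Measure.map_apply (continuous_eval_const t).measurable measurableSet_Iic]
  rfl

lemma monotone_margF (t : unitInterval) : Monotone (margF P t) :=
  margF_eq_cdf P t ▸ monotone_cdf _

variable {P} {t : unitInterval}

lemma nullSingletonClass_map_eval (hF : Continuous (margF P t)) :
    NullSingletonClass (P.map fun x : FSp => x t) := by
  refine ⟨fun c => ?_⟩
  rw [margF_eq_cdf] at hF
  rw [← measure_cdf (P.map fun x : FSp => x t), StieltjesFunction.measure_singleton,
    ((monotone_cdf _).continuousWithinAt_Iio_iff_leftLim_eq.1 hF.continuousWithinAt), sub_self,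
    ENNReal.ofReal_zero]

lemma ae_eval_ne (hF : Continuous (margF P t)) (c : ℝ) : ∀ᵐ x ∂P, x t ≠ c := by
  have := nullSingletonClass_map_eval hF
  have := measure_singleton (μ := P.map fun x : FSp => x t) c
  rw [Measure.map_apply (continuous_eval_const t).measurable (measurableSet_singleton c)] at this
  rw [ae_iff]
  simp only [ne_eq, not_not]
  exact this

lemma nullSingletonClass_of_continuous_margF (hF : Continuous (margF P t)) : NullSingletonClass P :=
  ⟨fun h => measure_mono_null (fun x hx => by simp [mem_singleton_iff.1 hx])
    (ae_iff.1 (ae_eval_ne hF (h t)))⟩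

lemma pdepth_eq (hF : Continuous (margF P t)) (g : unitInterval → ℝ) :
    pdepth P g t = 1 - |1 - 2 * margF P t (g t)| := by
  have hm : Measurable fun x : FSp => x t := (continuous_eval_const t).measurable
  have := nullSingletonClass_map_eval hF
  have hgt : (P {x : FSp | g t < x t}).toReal = 1 - margF P t (g t) := by
    rw [margF_eq_cdf, cdf_eq_real, ← probReal_compl_eq_one_sub measurableSet_Iic, compl_Iic,
      measureReal_def, Measure.map_apply hm measurableSet_Ioi]
    rfl
  have hlt : (P {x : FSp | x t < g t}).toReal = margF P t (g t) := by
    rw [margF_eq_cdf, cdf_eq_real, ← measureReal_congr Iio_ae_eq_Iic, measureReal_def,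
      Measure.map_apply hm measurableSet_Iio]
    rfl
  rw [pdepth, hgt, hlt]
  ring_nf

lemma continuous_margF_comp (hF : ∀ t, Continuous (margF P t)) {f : unitInterval → ℝ}
    (hf : Continuous f) : Continuous fun t => margF P t (f t) := by
  refine continuous_iff_continuousAt.2 fun t => ?_
  have hmeas (s : unitInterval) : MeasurableSet {x : FSp | x s ≤ f s} :=
    measurableSet_le (continuous_eval_const s).measurable measurable_const
  -- Off the null set `{x | x t = f t}`, the event `x s ≤ f s` is eventually constant in `s`.
  have hlim : ∀ᵐ x ∂P, ∀ᶠ s in 𝓝 t, x ∈ {x : FSp | x s ≤ f s} ↔ x ∈ {x : FSp | x t ≤ f t} := by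
    filter_upwards [ae_eval_ne (hF t) (f t)] with x hx
    rcases hx.lt_or_gt with h | h
    · filter_upwards [(x.continuous.tendsto t).eventually_lt (hf.tendsto t) h] with s hs
      simp [hs.le, h.le]
    · filter_upwards [(hf.tendsto t).eventually_lt (x.continuous.tendsto t) h] with s hs
      simp [not_le.2 hs, not_le.2 h]
  exact (ENNReal.tendsto_toReal (measure_ne_top _ _)).comp
    (tendsto_measure_of_ae_tendsto_indicator_of_isFiniteMeasure _ (hmeas t) hmeas hlim)

lemma continuous_pdepth (hF : ∀ t, Continuous (margF P t)) {f : unitInterval → ℝ}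
    (hf : Continuous f) : Continuous (pdepth P f) := by
  have := continuous_margF_comp hF hf
  simp_rw [funext fun t => pdepth_eq (hF t) f]
  fun_prop

lemma continuous_pdepth_apply (hF : Continuous (margF P t)) :
    Continuous fun x : FSp => pdepth P x t := by
  simp_rw [pdepth_eq hF]
  have := hF.comp (continuous_eval_const t : Continuous fun x : FSp => x t)
  fun_prop

variable (P)

lemma pdepth_nonneg (g : unitInterval → ℝ) (t : unitInterval) : 0 ≤ pdepth P g t := by
  have h₁ : (P {x : FSp | g t < x t}).toReal ≤ 1 := measureReal_le_one
  have h₂ : (P {x : FSp | x t < g t}).toReal ≤ 1 := measureReal_le_one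
  rw [pdepth, sub_nonneg, abs_sub_le_iff]
  constructor <;> linarith [ENNReal.toReal_nonneg (a := P {x : FSp | g t < x t}),
    ENNReal.toReal_nonneg (a := P {x : FSp | x t < g t})]

end Marginal

section DepthCDF

variable (P : Measure FSp) {g h : unitInterval → ℝ} {r c : ℝ}

lemma dcdf_nonneg : 0 ≤ dcdf P g r := ENNReal.toReal_nonneg

lemma dcdf_mono : Monotone (dcdf P g) := fun _ _ hab =>
  ENNReal.toReal_mono (measure_ne_top _ _) (measure_mono fun _ ht => le_trans ht hab)

lemma dcdf_eq_one_of_forall_pdepth_le (h : ∀ t, pdepth P g t ≤ r) : dcdf P g r = 1 := by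
  have hall : {t | pdepth P g t ≤ r} = univ := eq_univ_of_forall h
  rw [dcdf, hall, measure_univ, ENNReal.toReal_one]

lemma exists_pdepth_le_of_dcdf_pos (hr : 0 < dcdf P g r) : ∃ t, pdepth P g t ≤ r :=
  nonempty_of_measure_ne_zero (ENNReal.toReal_pos_iff.1 hr).1.ne'

lemma Rset_comm : Rset P g h = Rset P h g :=
  Set.ext fun _ => and_congr_right fun _ => ne_comm

lemma dmin_nonneg : 0 ≤ dmin P g := Real.sInf_nonneg fun _ hr => hr.1.1

lemma one_mem_setOf_dcdf_pos : (1:ℝ) ∈ {r ∈ Icc (0:ℝ) 1 | 0 < dcdf P g r} :=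
  ⟨⟨zero_le_one, le_rfl⟩,
    (dcdf_eq_one_of_forall_pdepth_le P (pdepth_le_one P g)).symm ▸ one_pos⟩

lemma measure_dmin_eq_null [NullSingletonClass P]
    (hcond : ∀ h : FSp, P {x : FSp | dmin P ⇑x = dmin P ⇑h ∧ x ≠ h} = 0) (c : ℝ) :
    P {x : FSp | dmin P x = c} = 0 := by
  by_cases hc : ∃ h : FSp, dmin P h = c
  · obtain ⟨h, rfl⟩ := hc
    refine measure_mono_null (fun x hx => ?_) (measure_union_null (measure_singleton h) (hcond h))
    by_cases hxh : x = h
    exacts [Or.inl hxh, Or.inr ⟨hx, hxh⟩]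
  · exact measure_mono_null (fun x hx => (hc ⟨x, hx⟩).elim) measure_empty

lemma le_dmin_of_forall_le_pdepth (h : ∀ t, c ≤ pdepth P g t) : c ≤ dmin P g :=
  le_csInf ⟨1, one_mem_setOf_dcdf_pos P⟩ fun _ hr =>
    let ⟨t, ht⟩ := exists_pdepth_le_of_dcdf_pos P hr.2
    (h t).trans ht

lemma dcdf_pos_of_dmin_lt (hr : dmin P g < r) : 0 < dcdf P g r := by
  obtain ⟨s, hs, hsr⟩ := exists_lt_of_csInf_lt ⟨1, one_mem_setOf_dcdf_pos P⟩ hr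
  exact hs.2.trans_le (dcdf_mono P hsr.le)

variable [IsProbabilityMeasure P]

lemma dmin_le_of_dcdf_pos (hr : r ≤ 1) (hpos : 0 < dcdf P g r) : dmin P g ≤ r := by
  obtain ⟨t, ht⟩ := exists_pdepth_le_of_dcdf_pos P hpos
  exact csInf_le ⟨0, fun _ hs => hs.1.1⟩ ⟨⟨(pdepth_nonneg P g t).trans ht, hr⟩, hpos⟩

lemma dmin_le_of_forall_pdepth_le (hc : c ≤ 1) (h : ∀ t, pdepth P g t ≤ c) : dmin P g ≤ c :=
  dmin_le_of_dcdf_pos P hc (by rw [dcdf_eq_one_of_forall_pdepth_le P h]; exact one_pos)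

lemma dmin_le_one : dmin P g ≤ 1 := dmin_le_of_forall_pdepth_le P le_rfl (pdepth_le_one P g)

lemma dcdf_eq_zero_of_lt_dmin (hr : r < dmin P g) : dcdf P g r = 0 :=
  (dcdf_nonneg P).eq_or_lt.elim Eq.symm fun hpos =>
    absurd (dmin_le_of_dcdf_pos P (hr.le.trans (dmin_le_one P)) hpos) (not_le.2 hr)

lemma dcdf_lt_dcdf_of_mem_Ioo_dmin (hr : r ∈ Ioo (dmin P g) (dmin P h)) :
    dcdf P h r < dcdf P g r := by
  rw [dcdf_eq_zero_of_lt_dmin P hr.2]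
  exact dcdf_pos_of_dmin_lt P hr.1

lemma Rset_nonempty_and_sInf_eq_of_dmin_lt (hgh : dmin P g < dmin P h) :
    (Rset P g h).Nonempty ∧ sInf (Rset P g h) = dmin P g := by
  have hIoo : Ioo (dmin P g) (dmin P h) ⊆ Rset P g h := fun r hr =>
    ⟨⟨(dmin_nonneg P).trans hr.1.le, hr.2.le.trans (dmin_le_one P)⟩,
      (dcdf_lt_dcdf_of_mem_Ioo_dmin P hr).ne'⟩
  have hne := (nonempty_Ioo.2 hgh).mono hIoo
  refine ⟨hne, le_antisymm (le_of_forall_gt_imp_ge_of_dense fun c hc => ?_) ?_⟩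
  · obtain ⟨r, hgr, hr⟩ := exists_between (lt_min hc hgh)
    exact (csInf_le ⟨0, fun _ hs => hs.1.1⟩ (hIoo ⟨hgr, hr.trans_le (min_le_right _ _)⟩)).trans
      (hr.le.trans (min_le_left _ _))
  · refine le_csInf hne fun r hr => le_of_not_gt fun hlt => hr.2 ?_
    rw [dcdf_eq_zero_of_lt_dmin P hlt, dcdf_eq_zero_of_lt_dmin P (hlt.trans hgh)]

lemma prec_of_dmin_lt (hgh : dmin P g < dmin P h) : prec P g h := by
  obtain ⟨hne, hinf⟩ := Rset_nonempty_and_sInf_eq_of_dmin_lt P hgh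
  refine ⟨hne, dmin P h - dmin P g, sub_pos.2 hgh, fun r ⟨hr, _⟩ => ?_⟩
  rw [hinf] at hr
  exact dcdf_lt_dcdf_of_mem_Ioo_dmin P ⟨hr.1, by linarith [hr.2]⟩

lemma not_prec_of_dmin_lt (hhg : dmin P h < dmin P g) : ¬ prec P g h := by
  rintro ⟨-, δ, hδ, hlt⟩
  rw [Rset_comm, (Rset_nonempty_and_sInf_eq_of_dmin_lt P hhg).2] at hlt
  obtain ⟨r, hhr, hr⟩ := exists_between (lt_min (lt_add_of_pos_right (dmin P h) hδ) hhg)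
  have hrg : r < dmin P g := hr.trans_le (min_le_right _ _)
  have := hlt r ⟨⟨hhr, hr.trans_le (min_le_left _ _)⟩,
    (dmin_nonneg P).trans hhr.le, hrg.le.trans (dmin_le_one P)⟩
  rw [dcdf_eq_zero_of_lt_dmin P hrg] at this
  exact this.not_ge (dcdf_nonneg P)

lemma ed_eq_measure_dmin_lt (hlevel : ∀ c, P {x : FSp | dmin P x = c} = 0)
    (g : unitInterval → ℝ) : ed P g = (P {x : FSp | dmin P x < dmin P g}).toReal := by
  refine congrArg ENNReal.toReal <|
    le_antisymm ?_ (measure_mono fun x hx => not_prec_of_dmin_lt P hx)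
  calc P {x : FSp | ¬ prec P g x}
      ≤ P ({x : FSp | dmin P x < dmin P g} ∪ {x : FSp | dmin P x = dmin P g}) :=
        measure_mono fun x hx => (not_lt.1 (mt (prec_of_dmin_lt P) hx)).lt_or_eq
    _ ≤ P {x : FSp | dmin P x < dmin P g} := by
        rw [← add_zero (P {x : FSp | dmin P x < dmin P g}), ← hlevel (dmin P g)]
        exact measure_union_le _ _

end DepthCDF

section ContinuousMarginals

variable {P : Measure FSp} [IsProbabilityMeasure P] {f : unitInterval → ℝ}

lemma dmin_le_pdepth (hF : ∀ t, Continuous (margF P t)) (hf : Continuous f) (t : unitInterval) :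
    dmin P f ≤ pdepth P f t := by
  refine le_of_forall_gt_imp_ge_of_dense fun r hr => ?_
  rcases le_or_gt r 1 with hr1 | hr1
  · refine dmin_le_of_dcdf_pos P hr1 (ENNReal.toReal_pos ?_ (measure_ne_top _ _))
    have hopen : IsOpen {s | pdepth P f s < r} :=
      isOpen_lt (continuous_pdepth hF hf) continuous_const
    exact ((hopen.measure_pos volume ⟨t, hr⟩).trans_le
      (measure_mono fun s (hs : pdepth P f s < r) => hs.le)).ne'
  · exact (dmin_le_one P).trans hr1.le

lemma dmin_eq_iInf_pdepth (hF : ∀ t, Continuous (margF P t)) (hf : Continuous f) :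
    dmin P f = ⨅ t, pdepth P f t :=
  le_antisymm (le_ciInf (dmin_le_pdepth hF hf))
    (le_dmin_of_forall_le_pdepth P (ciInf_le ⟨0, by rintro _ ⟨s, rfl⟩; exact pdepth_nonneg P f s⟩))

lemma measurable_dmin (hF : ∀ t, Continuous (margF P t)) : Measurable fun x : FSp => dmin P x := by
  simp_rw [dmin_eq_iInf_pdepth hF (ContinuousMap.continuous _)]
  refine UpperSemicontinuous.measurable (upperSemicontinuous_ciInf (fun x => ?_)
    fun t => (continuous_pdepth_apply (hF t)).upperSemicontinuous)
  exact ⟨0, by rintro _ ⟨s, rfl⟩; exact pdepth_nonneg P x s⟩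

variable {t : unitInterval} {γ : ℝ}

lemma margF_quant (hF : Continuous (margF P t)) {a : ℝ} (ha : a ∈ Ioo (0:ℝ) 1) :
    margF P t (quant P a t) = a :=
  apply_sInf_setOf_le_apply hF (margF_eq_cdf P t ▸ tendsto_cdf_atBot _)
    (margF_eq_cdf P t ▸ tendsto_cdf_atTop _) ha

lemma le_pdepth_of_mem_Icc_quant (hF : Continuous (margF P t)) (hγ : γ ∈ Ioo (0:ℝ) 1)
    (hf : f t ∈ Icc (quant P (γ / 2) t) (quant P (1 - γ / 2) t)) : γ ≤ pdepth P f t := by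
  rw [pdepth_eq hF]
  exact le_one_sub_abs_of_mem_Icc (monotone_margF P t)
    (margF_quant hF ⟨by linarith [hγ.1], by linarith [hγ.2]⟩)
    (margF_quant hF ⟨by linarith [hγ.2], by linarith [hγ.1]⟩) hf

lemma pdepth_le_of_notMem_Icc_quant (hF : Continuous (margF P t)) (hγ : γ ∈ Ioo (0:ℝ) 1)
    (hf : f t ∉ Icc (quant P (γ / 2) t) (quant P (1 - γ / 2) t)) : pdepth P f t ≤ γ := by
  rw [pdepth_eq hF]
  exact one_sub_abs_le_of_notMem_Icc (monotone_margF P t)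
    (margF_quant hF ⟨by linarith [hγ.1], by linarith [hγ.2]⟩)
    (margF_quant hF ⟨by linarith [hγ.2], by linarith [hγ.1]⟩) hf

lemma dmin_quant (hF : ∀ t, Continuous (margF P t)) (hγ : γ ∈ Ioo (0:ℝ) 1) :
    dmin P (quant P (γ / 2)) = γ := by
  have hq (t : unitInterval) : pdepth P (quant P (γ / 2)) t = γ := by
    rw [pdepth_eq (hF t), margF_quant (hF t) ⟨by linarith [hγ.1], by linarith [hγ.2]⟩,
      abs_of_nonneg (by linarith [hγ.2])]
    ring
  exact le_antisymm (dmin_le_of_forall_pdepth_le P hγ.2.le fun t => (hq t).le)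
    (le_dmin_of_forall_le_pdepth P fun t => (hq t).ge)

end ContinuousMarginals

theorem pointwise_region_is_ED_region_general (P : Measure FSp) [IsProbabilityMeasure P]
    (γ : ℝ) (hγ : γ ∈ Ioo (0:ℝ) 1)
    (hFcont : ∀ t : unitInterval, Continuous (margF P t))
    (hcond : ∀ h : FSp, P {x : FSp | dmin P ⇑x = dmin P ⇑h ∧ x ≠ h} = 0) :
    P (symmDiff
        {f : FSp | ∀ t, quant P (γ/2) t ≤ f t ∧ f t ≤ quant P (1 - γ/2) t}
        {f : FSp | ed P (quant P (γ/2)) ≤ ed P ⇑f}) = 0 := by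
  have := nullSingletonClass_of_continuous_margF (hFcont 0)
  have hlevel := measure_dmin_eq_null P hcond
  set D : FSp → ℝ := fun x => dmin P x
  have hed (f : FSp) :
      ed P (quant P (γ / 2)) ≤ ed P f ↔ P {x | D x < γ} ≤ P {x | D x < D f} := by
    rw [ed_eq_measure_dmin_lt P hlevel, ed_eq_measure_dmin_lt P hlevel, dmin_quant hFcont hγ,
      ENNReal.toReal_le_toReal (measure_ne_top _ _) (measure_ne_top _ _)]
  have hQC (f : FSp) (hf : ∀ t, quant P (γ/2) t ≤ f t ∧ f t ≤ quant P (1 - γ/2) t) :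
      ed P (quant P (γ/2)) ≤ ed P f :=
    (hed f).2 <| measure_mono fun x hx => hx.trans_le <| le_dmin_of_forall_le_pdepth P fun t =>
      le_pdepth_of_mem_Icc_quant (hFcont t) hγ (hf t)
  rw [Set.symmDiff_def]
  refine measure_union_null (measure_mono_null (fun f hf => hf.2 (hQC f hf.1)) measure_empty) ?_
  refine measure_mono_null (fun f ⟨hfC, hfQ⟩ => ?_) (measure_union_null (hlevel γ)
    (measure_setOf_lt_and_measure_lt_le P (measurable_dmin hFcont) γ))
  obtain ⟨t, ht⟩ := not_forall.1 hfQ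
  rcases ((dmin_le_pdepth hFcont f.continuous t).trans
    (pdepth_le_of_notMem_Icc_quant (hFcont t) hγ ht)).eq_or_lt with h | h
  exacts [Or.inl h, Or.inr ⟨h, (hed f).1 hfC⟩]

/-- **Proposition 5 (correspondence between pointwise and extremal-depth
central regions).** -/
theorem pointwise_region_is_ED_region (P : Measure FSp) [IsProbabilityMeasure P]
    (γ : ℝ) (hγ : γ ∈ Ioo (0:ℝ) 1)
    (hFcont : ∀ t : unitInterval, Continuous (margF P t))
    (hq1 : Continuous fun t => quant P (γ/2) t)
    (hq2 : Continuous fun t => quant P (1 - γ/2) t)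
    (hcond : ∀ h : FSp, P {x : FSp | dmin P ⇑x = dmin P ⇑h ∧ x ≠ h} = 0) :
    P (symmDiff
        {f : FSp | ∀ t, quant P (γ/2) t ≤ f t ∧ f t ≤ quant P (1 - γ/2) t}
        {f : FSp | ed P (quant P (γ/2)) ≤ ed P ⇑f}) = 0 :=
  pointwise_region_is_ED_region_general P γ hγ hFcont hcond
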